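/- For every PDD P over Var, D and Act and every total order π on the set of predicates labeling its decision nodes, there exists a consistent reduced π-ordered PDD P' over Var, D and Act that is semantically equivalent to P, i.e. ⟦P'⟧(ε) = ⟦P⟧(ε) for every evaluation ε : Var → D. -/
import Mathlib


/-- Comparison relations for axis-aligned predicates. -/
inductive Cmp where
  | eq | ge | gt
deriving DecidableEq

/-- An axis-aligned predicate `x ∼ c` over variables `Var` and domain `ℚ`. -/
structure APred (Var : Type) where
  x : Var
  cmp : Cmp
  c : ℚ

/-- Satisfaction of an axis-aligned predicate by an evaluation `ε : Var → ℚ`. -/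
def APred.holds {Var : Type} (ε : Var → ℚ) (p : APred Var) : Bool :=
  match p.cmp with
  | .eq => decide (ε p.x = p.c)
  | .ge => decide (p.c ≤ ε p.x)
  | .gt => decide (p.c < ε p.x)

/-- A (multi-terminal) decision diagram with decision nodes labeled by `L`
and action nodes labeled by subsets of `Act`.  A rank function ensures
acyclicity.  Taking `L` to be a type of Boolean variables yields BDDs;
taking `L = APred Var` yields PDDs. -/
structure DD (L : Type) (Act : Type) where
  /-- the (finite) set of nodes -/
  N : Type
  fin : Fintype N
  /-- decision nodes are labeled by `Sum.inl l` with `l : L`;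
  action nodes are labeled by `Sum.inr A` with `A ⊆ Act`. -/
  label : N → L ⊕ Set Act
  /-- successor function (its values on action nodes are irrelevant) -/
  succ : N → Bool → N
  root : N
  rk : N → ℕ
  rk_lt : ∀ n b l, label n = Sum.inl l → rk (succ n b) < rk n

/-- Semantics of the subdiagram rooted at `n`, given a Boolean valuation of labels. -/
def DD.semNode {L Act : Type} (B : DD L Act) (f : L → Bool) (n : B.N) : Set Act :=
  match h : B.label n with
  | Sum.inr A => A
  | Sum.inl l => B.semNode f (B.succ n (f l))
termination_by B.rk n
decreasing_by exact B.rk_lt n (f l) l h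

/-- Semantics of a decision diagram, given a Boolean valuation of its labels. -/
def DD.sem {L Act : Type} (B : DD L Act) (f : L → Bool) : Set Act :=
  B.semNode f B.root

/-- A node is a decision node iff its label is a left injection. -/
def DD.IsDecision {L Act : Type} (B : DD L Act) (n : B.N) : Prop :=
  ∃ l, B.label n = Sum.inl l

/-- `π`-orderedness: labels strictly increase (w.r.t. the ranking `π` of labels)
along edges between decision nodes. -/
def DD.Ordered {L Act : Type} (B : DD L Act) (π : L → ℕ) : Prop :=
  ∀ n b l l', B.label n = Sum.inl l → B.label (B.succ n b) = Sum.inl l' → π l < π l'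

/-- The edge relation of a decision diagram. -/
def DD.Edge {L Act : Type} (B : DD L Act) (n m : B.N) : Prop :=
  B.IsDecision n ∧ ∃ b, m = B.succ n b

/-- The set of nodes reachable from `n`. -/
def DD.Reach {L Act : Type} (B : DD L Act) (n : B.N) : Set B.N :=
  {m | Relation.ReflTransGen B.Edge n m}

/-- Isomorphism of the subdiagrams rooted at `n` and `n'`: a bijection between
the reachable node sets mapping root to root and preserving labels and successors. -/
def DD.Iso {L Act : Type} (B : DD L Act) (n n' : B.N) : Prop :=
  ∃ φ : B.N → B.N,
    Set.BijOn φ (B.Reach n) (B.Reach n') ∧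
    φ n = n' ∧
    (∀ m ∈ B.Reach n, B.label (φ m) = B.label m) ∧
    (∀ m ∈ B.Reach n, B.IsDecision m → ∀ b, φ (B.succ m b) = B.succ (φ m) b)

/-- Reducedness: every decision node is essential and no two distinct nodes
root isomorphic subdiagrams. -/
def DD.Reduced {L Act : Type} (B : DD L Act) : Prop :=
  (∀ n, B.IsDecision n → B.succ n false ≠ B.succ n true) ∧
  (∀ n n', B.Iso n n' → n = n')

/-- Following a sequence of decision bits from a node. -/
def DD.follow {L Act : Type} (B : DD L Act) : B.N → List Bool → B.N
  | n, [] => n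
  | n, b :: bs => B.follow (B.succ n b) bs

/-- `bs` encodes a path from the root to an action node: all intermediate nodes
are decision nodes and the final node is an action node. -/
def DD.IsPathToAction {L Act : Type} (B : DD L Act) (bs : List Bool) : Prop :=
  (∀ i, i < bs.length → B.IsDecision (B.follow B.root (bs.take i))) ∧
  (∃ A : Set Act, B.label (B.follow B.root bs) = Sum.inr A)

/-- Predicate decision diagrams: decision diagrams labeled by axis-aligned predicates. -/
abbrev PDD (Var Act : Type) := DD (APred Var) Act

/-- Semantics of a PDD on an evaluation `ε : Var → ℚ`. -/
def PDD.sem {Var Act : Type} (P : PDD Var Act) (ε : Var → ℚ) : Set Act :=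
  DD.sem P (fun p => p.holds ε)

/-- The path encoded by `bs` is consistent with the evaluation `ε`:
at every step, the decision bit matches the truth value of the node's predicate. -/
def PDD.PathConsistentWith {Var Act : Type} (P : PDD Var Act) (bs : List Bool)
    (ε : Var → ℚ) : Prop :=
  ∀ i, (h : i < bs.length) → ∀ p, P.label (P.follow P.root (bs.take i)) = Sum.inl p →
    p.holds ε = bs.get ⟨i, h⟩

/-- A PDD is consistent if every path from the root to an action node is
consistent with some evaluation. -/
def PDD.Consistent {Var Act : Type} (P : PDD Var Act) : Prop :=
  ∀ bs : List Bool, P.IsPathToAction bs → ∃ ε : Var → ℚ, P.PathConsistentWith bs ε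

/-- The `γ`-lifting of an evaluation `ε : Var → ℚ` to a Boolean valuation of `PVar`. -/
def liftEval {Var PVar : Type} (γ : PVar → APred Var) (ε : Var → ℚ) : PVar → Bool :=
  fun x => (γ x).holds ε

/-- The PDD `γ(B)` arising from a BDD `B` by relabeling every decision node `d`
with the predicate `γ (λ d)`. -/
def DD.relabel {L L' Act : Type} (B : DD L Act) (γ : L → L') : DD L' Act where
  N := B.N
  fin := B.fin
  label := fun n => (B.label n).map γ id
  succ := B.succ
  root := B.root
  rk := B.rk
  rk_lt := by
    intro n b l' h
    cases hl : B.label n with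
    | inl l => exact B.rk_lt n b l hl
    | inr A => simp [hl, Sum.map] at h


namespace PDDProof
end PDDProof
attribute [local instance] Classical.propDecidable

/-! ### Generic DD lemmas -/

section DDLemmas
variable {L Act : Type} (B : DD L Act)

theorem DD.semNode_inr (f : L → Bool) (n : B.N) (A : Set Act)
    (h : B.label n = Sum.inr A) : B.semNode f n = A := by
  rw [DD.semNode]
  split
  · rename_i h'; rw [h] at h'; cases h'; rfl
  · rename_i h'; rw [h] at h'; cases h'

theorem DD.semNode_inl (f : L → Bool) (n : B.N) (l : L)
    (h : B.label n = Sum.inl l) : B.semNode f n = B.semNode f (B.succ n (f l)) := by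
  rw [DD.semNode]
  split
  · rename_i h'; rw [h] at h'; cases h'
  · rename_i h'; rw [h] at h'; cases h'; rfl

theorem DD.reach_refl (n : B.N) : n ∈ B.Reach n := Relation.ReflTransGen.refl

theorem DD.reach_succ {n : B.N} (hd : B.IsDecision n) (b : Bool) :
    B.succ n b ∈ B.Reach n :=
  Relation.ReflTransGen.single ⟨hd, b, rfl⟩

theorem DD.reach_trans {n m m' : B.N} (h1 : m ∈ B.Reach n) (h2 : m' ∈ B.Reach m) :
    m' ∈ B.Reach n := Relation.ReflTransGen.trans h1 h2

theorem DD.iso_succ {n n' : B.N} (h : B.Iso n n') (hd : B.IsDecision n) (b : Bool) :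
    B.Iso (B.succ n b) (B.succ n' b) := by
  obtain ⟨φ, hbij, hroot, hlab, hsucc⟩ := h
  have hφroot : φ (B.succ n b) = B.succ n' b := by
    rw [hsucc n (B.reach_refl n) hd b, hroot]
  have hsub : B.Reach (B.succ n b) ⊆ B.Reach n := fun m hm =>
    B.reach_trans (B.reach_succ hd b) hm
  have hmaps : ∀ m ∈ B.Reach (B.succ n b), φ m ∈ B.Reach (B.succ n' b) := by
    intro m hm
    induction hm with
    | refl => rw [hφroot]; exact B.reach_refl _
    | tail hc hedge ih =>
      rename_i c m
      obtain ⟨hdc, b', rfl⟩ := hedge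
      have hcn : c ∈ B.Reach n := hsub hc
      have hφdc : B.IsDecision (φ c) := by
        obtain ⟨l, hl⟩ := hdc
        exact ⟨l, by rw [hlab c hcn]; exact hl⟩
      rw [hsucc c hcn hdc b']
      exact Relation.ReflTransGen.tail ih ⟨hφdc, b', rfl⟩
  refine ⟨φ, ⟨hmaps, hbij.injOn.mono hsub, ?_⟩, hφroot,
    fun m hm => hlab m (hsub hm), fun m hm => hsucc m (hsub hm)⟩
  -- SurjOn
  intro m' hm'
  induction hm' with
  | refl => exact ⟨B.succ n b, B.reach_refl _, hφroot⟩
  | tail hc hedge ih =>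
    rename_i c m'
    obtain ⟨m, hmreach, rfl⟩ := ih
    obtain ⟨hdc, b', rfl⟩ := hedge
    have hmn : m ∈ B.Reach n := hsub hmreach
    have hdm : B.IsDecision m := by
      obtain ⟨l, hl⟩ := hdc
      exact ⟨l, by rw [← hlab m hmn]; exact hl⟩
    refine ⟨B.succ m b', Relation.ReflTransGen.tail hmreach ⟨hdm, b', rfl⟩, ?_⟩
    exact (hsucc m hmn hdm b').symm ▸ rfl

theorem DD.iso_label_eq {n n' : B.N} (h : B.Iso n n') : B.label n' = B.label n := by
  obtain ⟨φ, _, hroot, hlab, _⟩ := h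
  rw [← hroot]; exact hlab n (B.reach_refl n)

theorem DD.semNode_congr (f g : L → Bool)
    (hfg : ∀ n l, B.label n = Sum.inl l → f l = g l) (n : B.N) :
    B.semNode f n = B.semNode g n := by
  suffices H : ∀ k (n : B.N), B.rk n ≤ k → B.semNode f n = B.semNode g n from
    H (B.rk n) n le_rfl
  intro k
  induction k using Nat.strong_induction_on with
  | _ k ih =>
    intro n hk
    cases hl : B.label n with
    | inr A => rw [B.semNode_inr f n A hl, B.semNode_inr g n A hl]
    | inl l =>
      rw [B.semNode_inl f n l hl, B.semNode_inl g n l hl, hfg n l hl]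
      exact ih (B.rk (B.succ n (g l))) (lt_of_lt_of_le (B.rk_lt n (g l) l hl) hk) _ le_rfl

end DDLemmas

/-! ### Pruned decision trees -/

inductive PTree (Var Act : Type) where
  | leaf (A : Set Act)
  | node (p : APred Var) (t0 t1 : PTree Var Act)

namespace PTree

variable {Var Act : Type}

def labelF : PTree Var Act → APred Var ⊕ Set Act
  | .leaf A => .inr A
  | .node p _ _ => .inl p

def child : PTree Var Act → Bool → PTree Var Act
  | .leaf A, _ => .leaf A
  | .node _ t0 t1, b => if b then t1 else t0

def ht : PTree Var Act → ℕ
  | .leaf _ => 0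
  | .node _ t0 t1 => max t0.ht t1.ht + 1

def subs : PTree Var Act → List (PTree Var Act)
  | .leaf A => [.leaf A]
  | .node p t0 t1 => .node p t0 t1 :: (t0.subs ++ t1.subs)

def evalB (f : APred Var → Bool) : PTree Var Act → Set Act
  | .leaf A => A
  | .node p t0 t1 => if f p then t1.evalB f else t0.evalB f

def followT : PTree Var Act → List Bool → PTree Var Act
  | T, [] => T
  | T, b :: bs => followT (T.child b) bs

theorem self_mem_subs (T : PTree Var Act) : T ∈ T.subs := by
  cases T <;> simp [subs]

theorem subs_subset {T T' : PTree Var Act} (h : T' ∈ T.subs) : T'.subs ⊆ T.subs := by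
  induction T with
  | leaf A =>
    simp only [subs, List.mem_singleton] at h
    subst h; exact fun x hx => hx
  | node p t0 t1 ih0 ih1 =>
    rcases List.mem_cons.mp h with h | h
    · subst h; exact fun x hx => hx
    · rcases List.mem_append.mp h with h | h
      · exact fun x hx => List.mem_cons.mpr (Or.inr (List.mem_append.mpr (Or.inl (ih0 h hx))))
      · exact fun x hx => List.mem_cons.mpr (Or.inr (List.mem_append.mpr (Or.inr (ih1 h hx))))

theorem child_mem_subs_self (T : PTree Var Act) (b : Bool) : T.child b ∈ T.subs := by
  cases T with
  | leaf A => simp [child, subs]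
  | node p t0 t1 =>
    cases b
    · exact List.mem_cons.mpr (.inr (List.mem_append.mpr (.inl (self_mem_subs t0))))
    · exact List.mem_cons.mpr (.inr (List.mem_append.mpr (.inr (self_mem_subs t1))))

theorem child_mem_subs {T T' : PTree Var Act} (h : T' ∈ T.subs) (b : Bool) :
    T'.child b ∈ T.subs := subs_subset h (child_mem_subs_self T' b)

theorem followT_leaf (A : Set Act) (l : List Bool) :
    followT (PTree.leaf (Var := Var) A) l = .leaf A := by
  induction l with
  | nil => rfl
  | cons b bs ih => simpa [followT, child] using ih

end PTree

/-! ### The pruning construction -/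

section Prune
variable {Var Act : Type}
variable (S : Set (APred Var)) (π : APred Var → ℕ) (F : (Var → ℚ) → Set Act) (M : ℕ)

/-- agreement of two evaluations on all predicates of `S` of level `≥ t` -/
def Agrees (t : ℕ) (ε ε' : Var → ℚ) : Prop :=
  ∀ p ∈ S, t ≤ π p → p.holds ε = p.holds ε'

/-- `F` restricted to `E` depends only on predicates of level `≥ t` -/
def InvP (E : Set (Var → ℚ)) (t : ℕ) : Prop :=
  ∀ ε ∈ E, ∀ ε' ∈ E, Agrees S π t ε ε' → F ε = F ε'

noncomputable def lvlP (E : Set (Var → ℚ)) : ℕ := Nat.findGreatest (InvP S π F E) M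

noncomputable def epsOf (E : Set (Var → ℚ)) : Var → ℚ :=
  if h : E.Nonempty then h.choose else fun _ => 0

def cutE (E : Set (Var → ℚ)) (p : APred Var) (b : Bool) : Set (Var → ℚ) :=
  {ε ∈ E | p.holds ε = b}

noncomputable def pruneT : ℕ → Set (Var → ℚ) → PTree Var Act
  | 0, E => .leaf (F (epsOf E))
  | (fuel+1), E =>
    if (∀ ε ∈ E, ∀ ε' ∈ E, F ε = F ε') then .leaf (F (epsOf E))
    else if hp : ∃ p ∈ S, π p = lvlP S π F M E then
      .node hp.choose (pruneT fuel (cutE E hp.choose false)) (pruneT fuel (cutE E hp.choose true))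
    else .leaf (F (epsOf E))

variable {S π F M}

theorem epsOf_mem {E : Set (Var → ℚ)} (hE : E.Nonempty) : epsOf E ∈ E := by
  rw [epsOf, dif_pos hE]; exact hE.choose_spec

theorem agrees_mono {t t' : ℕ} (h : t ≤ t') {ε ε' : Var → ℚ}
    (ha : Agrees S π t ε ε') : Agrees S π t' ε ε' :=
  fun p hp hle => ha p hp (le_trans h hle)

theorem invP_mono {E : Set (Var → ℚ)} {t t' : ℕ} (h : t' ≤ t)
    (hi : InvP S π F E t) : InvP S π F E t' :=
  fun ε hε ε' hε' ha => hi ε hε ε' hε' (agrees_mono h ha)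

variable (hF : ∀ ε ε', Agrees S π 0 ε ε' → F ε = F ε')
variable (hM : ∀ p ∈ S, π p < M)
variable (hπS : Set.InjOn π S)

include hF in
theorem invP_zero (E : Set (Var → ℚ)) : InvP S π F E 0 :=
  fun ε _ ε' _ ha => hF ε ε' ha

include hF in
theorem invP_lvl (E : Set (Var → ℚ)) : InvP S π F E (lvlP S π F M E) :=
  Nat.findGreatest_spec (Nat.zero_le M) (invP_zero hF E)

theorem lvlP_le (E : Set (Var → ℚ)) : lvlP S π F M E ≤ M := Nat.findGreatest_le M

include hM in
theorem const_of_inv_M {E : Set (Var → ℚ)} (h : InvP S π F E M) :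
    ∀ ε ∈ E, ∀ ε' ∈ E, F ε = F ε' :=
  fun ε hε ε' hε' => h ε hε ε' hε' (fun p hp hle => absurd hle (not_le.mpr (hM p hp)))

include hF hM in
theorem lvlP_lt_of_nc {E : Set (Var → ℚ)}
    (hnc : ¬ (∀ ε ∈ E, ∀ ε' ∈ E, F ε = F ε')) : lvlP S π F M E < M := by
  rcases lt_or_eq_of_le (lvlP_le (S := S) (π := π) (F := F) E) with h | h
  · exact h
  · exact absurd (const_of_inv_M hM (h ▸ invP_lvl hF E)) hnc

include hF hM in
theorem not_invP_succ {E : Set (Var → ℚ)}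
    (hnc : ¬ (∀ ε ∈ E, ∀ ε' ∈ E, F ε = F ε')) :
    ¬ InvP S π F E (lvlP S π F M E + 1) :=
  Nat.findGreatest_is_greatest (Nat.lt_succ_self _) (lvlP_lt_of_nc hF hM hnc)

include hF hM hπS in
theorem exists_pred_at {E : Set (Var → ℚ)}
    (hnc : ¬ (∀ ε ∈ E, ∀ ε' ∈ E, F ε = F ε')) :
    ∃ p ∈ S, π p = lvlP S π F M E := by
  by_contra hc
  push_neg at hc
  apply not_invP_succ hF hM hnc
  intro ε hε ε' hε' ha
  refine invP_lvl (M := M) hF E ε hε ε' hε' ?_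
  intro p hp hle
  rcases lt_or_eq_of_le hle with h | h
  · exact ha p hp h
  · exact absurd h.symm (hc p hp)

-- the full package for the decision-node case of `pruneT`
include hF hM hπS in
theorem pruneT_node {E : Set (Var → ℚ)} {fuel : ℕ}
    (hnc : ¬ (∀ ε ∈ E, ∀ ε' ∈ E, F ε = F ε')) :
    ∃ p, p ∈ S ∧ π p = lvlP S π F M E ∧
      pruneT S π F M (fuel+1) E =
        .node p (pruneT S π F M fuel (cutE E p false)) (pruneT S π F M fuel (cutE E p true)) ∧
      (∀ b, (cutE E p b).Nonempty) ∧
      (∀ b, lvlP S π F M E + 1 ≤ lvlP S π F M (cutE E p b)) ∧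
      (∃ ε₁ ∈ cutE E p false, ∃ ε₂ ∈ cutE E p true,
        Agrees S π (lvlP S π F M E + 1) ε₁ ε₂ ∧ F ε₁ ≠ F ε₂) := by
  have hp : ∃ p ∈ S, π p = lvlP S π F M E := exists_pred_at hF hM hπS hnc
  set t := lvlP S π F M E with ht
  obtain ⟨hpS, hpt⟩ := hp.choose_spec
  set p := hp.choose with hpdef
  -- key step : from non-invariance at t+1 get witnesses with different p-values
  have hkey : ∃ ε₁ ∈ cutE E p false, ∃ ε₂ ∈ cutE E p true,
      Agrees S π (t + 1) ε₁ ε₂ ∧ F ε₁ ≠ F ε₂ := by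
    have h1 := not_invP_succ hF hM hnc
    rw [InvP] at h1; push_neg at h1
    obtain ⟨ε₁, hε₁, ε₂, hε₂, ha, hne⟩ := h1
    have hagt : ∀ q ∈ S, t ≤ π q → q ≠ p → q.holds ε₁ = q.holds ε₂ := by
      intro q hq hle hqp
      refine ha q hq ?_
      rcases lt_or_eq_of_le hle with h | h
      · exact h
      · exact absurd (hπS hq hpS (h ▸ hpt.symm)) hqp
    have hdiff : p.holds ε₁ ≠ p.holds ε₂ := by
      intro heq
      apply hne
      refine invP_lvl (M := M) hF E ε₁ hε₁ ε₂ hε₂ ?_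
      intro q hq hle
      by_cases hqp : q = p
      · subst hqp; exact heq
      · exact hagt q hq (ht ▸ hle) hqp
    cases hb1 : p.holds ε₁ with
    | false =>
      have hb2 : p.holds ε₂ = true := by
        cases hb2 : p.holds ε₂
        · exact absurd (hb1.trans hb2.symm) hdiff
        · rfl
      exact ⟨ε₁, ⟨hε₁, hb1⟩, ε₂, ⟨hε₂, hb2⟩, ha, hne⟩
    | true =>
      have hb2 : p.holds ε₂ = false := by
        cases hb2 : p.holds ε₂
        · rfl
        · exact absurd (hb1.trans hb2.symm) hdiff
      refine ⟨ε₂, ⟨hε₂, hb2⟩, ε₁, ⟨hε₁, hb1⟩, fun q hq hle => (ha q hq hle).symm, hne.symm⟩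
  have hinvcut : ∀ b, InvP S π F (cutE E p b) (t + 1) := by
    intro b ε hε ε' hε' ha
    refine invP_lvl (M := M) hF E ε hε.1 ε' hε'.1 ?_
    intro q hq hle
    by_cases hqp : q = p
    · subst hqp; rw [hε.2, hε'.2]
    · refine ha q hq ?_
      rcases lt_or_eq_of_le hle with h | h
      · exact h
      · exact absurd (hπS hq hpS (h ▸ hpt.symm)) hqp
  refine ⟨p, hpS, hpt, ?_, ?_, ?_, hkey⟩
  · rw [pruneT, if_neg hnc, dif_pos hp]
  · obtain ⟨ε₁, h₁, ε₂, h₂, _, _⟩ := hkey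
    intro b; cases b
    · exact ⟨ε₁, h₁⟩
    · exact ⟨ε₂, h₂⟩
  · intro b
    exact Nat.le_findGreatest (Nat.succ_le_of_lt (lvlP_lt_of_nc hF hM hnc)) (hinvcut b)

end Prune

/-! ### Invariants of the pruned tree -/

section Invariants
variable {Var Act : Type}

/-- well-formedness of a pruned tree above level `t`:
all predicates are in `S`, levels strictly increase, and siblings differ -/
inductive GoodT (S : Set (APred Var)) (π : APred Var → ℕ) : ℕ → PTree Var Act → Prop
  | leaf (t : ℕ) (A : Set Act) : GoodT S π t (.leaf A)
  | node {t : ℕ} {p : APred Var} {t0 t1 : PTree Var Act} :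
      p ∈ S → t ≤ π p → GoodT S π (π p + 1) t0 → GoodT S π (π p + 1) t1 →
      t0 ≠ t1 → GoodT S π t (.node p t0 t1)

variable {S : Set (APred Var)} {π : APred Var → ℕ} {F : (Var → ℚ) → Set Act} {M : ℕ}

theorem goodT_mono {t t' : ℕ} (h : t' ≤ t) {T : PTree Var Act}
    (hg : GoodT S π t T) : GoodT S π t' T := by
  cases hg with
  | leaf => exact GoodT.leaf t' _
  | node hpS hle h0 h1 hne => exact GoodT.node hpS (le_trans h hle) h0 h1 hne

theorem goodT_evalB_agrees {t : ℕ} {T : PTree Var Act} (hg : GoodT S π t T)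
    {ε ε' : Var → ℚ} (ha : Agrees S π t ε ε') :
    T.evalB (fun p => p.holds ε) = T.evalB (fun p => p.holds ε') := by
  induction hg with
  | leaf => rfl
  | node hpS hle h0 h1 hne ih0 ih1 =>
    rename_i t p t0 t1
    have hp : p.holds ε = p.holds ε' := ha p hpS hle
    have ha' : Agrees S π (π p + 1) ε ε' := agrees_mono (le_trans hle (Nat.le_succ _)) ha
    simp only [PTree.evalB, hp]
    by_cases hb : p.holds ε' = true
    · rw [if_pos hb, if_pos hb]; exact ih1 ha'
    · rw [if_neg hb, if_neg hb]; exact ih0 ha'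

theorem goodT_subs {t : ℕ} {T T' : PTree Var Act} (hg : GoodT S π t T)
    (hm : T' ∈ T.subs) : ∃ t', GoodT S π t' T' := by
  induction T generalizing t with
  | leaf A =>
    simp only [PTree.subs, List.mem_singleton] at hm
    subst hm; exact ⟨t, GoodT.leaf t _⟩
  | node p t0 t1 ih0 ih1 =>
    cases hg with
    | node hpS hle h0 h1 hne =>
      rcases List.mem_cons.mp hm with hm | hm
      · subst hm; exact ⟨t, GoodT.node hpS hle h0 h1 hne⟩
      · rcases List.mem_append.mp hm with hm | hm
        · exact ih0 h0 hm
        · exact ih1 h1 hm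

variable (hF : ∀ ε ε', Agrees S π 0 ε ε' → F ε = F ε')
variable (hM : ∀ p ∈ S, π p < M)
variable (hπS : Set.InjOn π S)

include hF hM hπS in
theorem pruneT_evalB {fuel : ℕ} :
    ∀ {E : Set (Var → ℚ)}, E.Nonempty → M ≤ lvlP S π F M E + fuel →
      ∀ ε ∈ E, (pruneT S π F M fuel E).evalB (fun p => p.holds ε) = F ε := by
  induction fuel with
  | zero =>
    intro E hE hfe ε hε
    have hc : InvP S π F E M := invP_mono (by omega) (invP_lvl (M := M) hF E)
    exact (const_of_inv_M hM hc _ (epsOf_mem hE) ε hε :)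
  | succ fuel ih =>
    intro E hE hfe ε hε
    by_cases hnc : ∀ ε ∈ E, ∀ ε' ∈ E, F ε = F ε'
    · rw [pruneT, if_pos hnc]
      exact hnc _ (epsOf_mem hE) ε hε
    · obtain ⟨p, hpS, hpt, heq, hne, hlv, -⟩ := pruneT_node hF hM hπS (fuel := fuel) hnc
      rw [heq]
      have hεb : ε ∈ cutE E p (p.holds ε) := ⟨hε, rfl⟩
      have hfe' : ∀ b, M ≤ lvlP S π F M (cutE E p b) + fuel := fun b => by
        have := hlv b; omega
      cases hb : p.holds ε with
      | false =>
        simp only [PTree.evalB, hb, Bool.false_eq_true, if_false]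
        exact ih (hne false) (hfe' false) ε (hb ▸ hεb)
      | true =>
        simp only [PTree.evalB, hb, if_true]
        exact ih (hne true) (hfe' true) ε (hb ▸ hεb)

include hF hM hπS in
theorem pruneT_good {fuel : ℕ} :
    ∀ {E : Set (Var → ℚ)}, E.Nonempty → M ≤ lvlP S π F M E + fuel →
      GoodT S π (lvlP S π F M E) (pruneT S π F M fuel E) := by
  induction fuel with
  | zero => intro E hE hfe; exact GoodT.leaf _ _
  | succ fuel ih =>
    intro E hE hfe
    by_cases hnc : ∀ ε ∈ E, ∀ ε' ∈ E, F ε = F ε'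
    · rw [pruneT, if_pos hnc]; exact GoodT.leaf _ _
    · obtain ⟨p, hpS, hpt, heq, hne, hlv, ε₁, hε₁, ε₂, hε₂, ha, hFne⟩ :=
        pruneT_node hF hM hπS (fuel := fuel) hnc
      rw [heq]
      have hfe' : ∀ b, M ≤ lvlP S π F M (cutE E p b) + fuel := fun b => by
        have := hlv b; omega
      have hg : ∀ b, GoodT S π (π p + 1) (pruneT S π F M fuel (cutE E p b)) := fun b =>
        goodT_mono (hpt ▸ hlv b) (ih (hne b) (hfe' b))
      refine GoodT.node hpS (le_of_eq hpt.symm) (hg false) (hg true) ?_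
      -- essentiality
      intro hcontra
      apply hFne
      have h1 : F ε₁ = (pruneT S π F M fuel (cutE E p false)).evalB (fun q => q.holds ε₁) :=
        (pruneT_evalB hF hM hπS (hne false) (hfe' false) ε₁ hε₁).symm
      have h2 : F ε₂ = (pruneT S π F M fuel (cutE E p true)).evalB (fun q => q.holds ε₂) :=
        (pruneT_evalB hF hM hπS (hne true) (hfe' true) ε₂ hε₂).symm
      rw [h1, h2, hcontra]
      exact goodT_evalB_agrees (goodT_mono (hpt ▸ hlv true) (ih (hne true) (hfe' true)))
        (hpt ▸ ha)

include hF hM hπS in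
theorem pruneT_consistent (bs : List Bool) :
    ∀ (fuel : ℕ) {E : Set (Var → ℚ)}, E.Nonempty → M ≤ lvlP S π F M E + fuel →
      ∃ ε ∈ E, ∀ i, (h : i < bs.length) → ∀ p,
        (PTree.followT (pruneT S π F M fuel E) (bs.take i)).labelF = Sum.inl p →
        p.holds ε = bs.get ⟨i, h⟩ := by
  induction bs with
  | nil =>
    intro fuel E hE hfe
    exact ⟨hE.choose, hE.choose_spec, fun i h => by simp at h⟩
  | cons b bs ih =>
    intro fuel E hE hfe
    match fuel with
    | 0 =>
      refine ⟨hE.choose, hE.choose_spec, fun i h p hlab => ?_⟩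
      rw [show pruneT S π F M 0 E = .leaf (F (epsOf E)) from rfl,
        PTree.followT_leaf] at hlab
      cases hlab
    | fuel + 1 =>
      by_cases hnc : ∀ ε ∈ E, ∀ ε' ∈ E, F ε = F ε'
      · refine ⟨hE.choose, hE.choose_spec, fun i h p hlab => ?_⟩
        rw [pruneT, if_pos hnc, PTree.followT_leaf] at hlab
        cases hlab
      · obtain ⟨p, hpS, hpt, heq, hne, hlv, -⟩ := pruneT_node hF hM hπS (fuel := fuel) hnc
        have hfe' : M ≤ lvlP S π F M (cutE E p b) + fuel := by
          have := hlv b; omega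
        obtain ⟨ε, hεb, hcons⟩ := ih fuel (hne b) hfe'
        refine ⟨ε, hεb.1, fun i h q hlab => ?_⟩
        match i with
        | 0 =>
          rw [List.take_zero] at hlab
          rw [heq] at hlab
          cases hlab
          exact hεb.2
        | i + 1 =>
          have htake : (b :: bs).take (i+1) = b :: bs.take i := rfl
          rw [htake, heq] at hlab
          have hchild : PTree.followT
              (PTree.node p (pruneT S π F M fuel (cutE E p false))
                (pruneT S π F M fuel (cutE E p true))) (b :: bs.take i)
              = PTree.followT (pruneT S π F M fuel (cutE E p b)) (bs.take i) := by
            cases b <;> rfl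
          rw [hchild] at hlab
          exact hcons i (by simpa using h) q hlab

end Invariants

/-! ### The decision diagram of a tree -/

section TreeDD
variable {Var Act : Type}

noncomputable def treeDD (T₀ : PTree Var Act) : PDD Var Act where
  N := {T : PTree Var Act // T ∈ T₀.subs}
  fin := by
    have : Finite {T : PTree Var Act // T ∈ T₀.subs} := (T₀.subs.finite_toSet).to_subtype
    exact Fintype.ofFinite _
  label n := n.val.labelF
  succ n b := ⟨n.val.child b, PTree.child_mem_subs n.prop b⟩
  root := ⟨T₀, PTree.self_mem_subs T₀⟩
  rk n := n.val.ht
  rk_lt := by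
    rintro ⟨T, hT⟩ b l h
    cases T with
    | leaf A => cases h
    | node p t0 t1 =>
      show (PTree.child (.node p t0 t1) b).ht < (PTree.node p t0 t1).ht
      cases b
      · exact Nat.lt_succ_of_le (le_max_left _ _)
      · exact Nat.lt_succ_of_le (le_max_right _ _)

theorem treeDD_iso_eq (T₀ : PTree Var Act) :
    ∀ (k : ℕ) (n n' : (treeDD T₀).N), n.val.ht ≤ k → (treeDD T₀).Iso n n' → n = n' := by
  intro k
  induction k using Nat.strong_induction_on with
  | _ k ih =>
    rintro ⟨T, hT⟩ ⟨T', hT'⟩ hk hiso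
    have hlab := (treeDD T₀).iso_label_eq hiso
    cases T with
    | leaf A =>
      cases T' with
      | leaf A' =>
        have hAA : (Sum.inr A' : APred Var ⊕ Set Act) = Sum.inr A := hlab
        cases hAA; rfl
      | node p' t0' t1' => exact absurd hlab (by simp [treeDD, PTree.labelF])
    | node p t0 t1 =>
      cases T' with
      | leaf A' => exact absurd hlab (by simp [treeDD, PTree.labelF])
      | node p' t0' t1' =>
        have hp : p = p' :=
          (Sum.inl.inj (show (Sum.inl p' : APred Var ⊕ Set Act) = Sum.inl p from hlab)).symm
        subst hp
        have hd : (treeDD T₀).IsDecision ⟨.node p t0 t1, hT⟩ := ⟨p, rfl⟩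
        have key : ∀ b, (PTree.node p t0 t1).child b = (PTree.node p t0' t1').child b := by
          intro b
          have hiso' := (treeDD T₀).iso_succ hiso hd b
          have hlt : ((treeDD T₀).succ ⟨.node p t0 t1, hT⟩ b).val.ht < k :=
            lt_of_lt_of_le ((treeDD T₀).rk_lt ⟨.node p t0 t1, hT⟩ b p rfl) hk
          exact congrArg Subtype.val (ih _ hlt _ _ le_rfl hiso')
        have h0 := key false
        have h1 := key true
        simp only [PTree.child, if_true, Bool.false_eq_true, if_false] at h0 h1
        apply Subtype.ext
        show PTree.node p t0 t1 = PTree.node p t0' t1'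
        rw [h0, h1]

theorem treeDD_semNode (T₀ : PTree Var Act) (f : APred Var → Bool) :
    ∀ (T : PTree Var Act) (h : T ∈ T₀.subs),
      (treeDD T₀).semNode f ⟨T, h⟩ = T.evalB f := by
  intro T
  induction T with
  | leaf A => intro h; exact (treeDD T₀).semNode_inr f _ A rfl
  | node p t0 t1 ih0 ih1 =>
    intro h
    rw [(treeDD T₀).semNode_inl f ⟨.node p t0 t1, h⟩ p rfl]
    have hsucc : ∀ b, (treeDD T₀).semNode f ((treeDD T₀).succ ⟨.node p t0 t1, h⟩ b)
        = ((PTree.node p t0 t1).child b).evalB f := by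
      intro b
      cases b
      · exact ih0 (PTree.child_mem_subs h false)
      · exact ih1 (PTree.child_mem_subs h true)
    rw [hsucc (f p)]
    cases hb : f p <;> simp [PTree.evalB, PTree.child, hb]

theorem treeDD_follow (T₀ : PTree Var Act) :
    ∀ (l : List Bool) (T : PTree Var Act) (h : T ∈ T₀.subs),
      ((treeDD T₀).follow ⟨T, h⟩ l).val = PTree.followT T l := by
  intro l
  induction l with
  | nil => intro T h; rfl
  | cons b bs ih => intro T h; exact ih (T.child b) (PTree.child_mem_subs h b)

end TreeDD


/-- For every PDD `P` and every total order `π` on the set of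
predicates labeling its decision nodes, there is a consistent reduced `π`-ordered
PDD `P'` (whose predicates all occur in `P`) semantically equivalent to `P`. -/
theorem consistent_reduced_ordered_pdd
    {Var Act : Type} [Countable Var] [Fintype Act]
    (P : PDD Var Act) (π : APred Var → ℕ)
    (hπ : Set.InjOn π {p : APred Var | ∃ n : P.N, P.label n = Sum.inl p}) :
    ∃ P' : PDD Var Act,
      PDD.Consistent P' ∧ DD.Reduced P' ∧ DD.Ordered P' π ∧
      (∀ n : P'.N, ∀ p : APred Var, P'.label n = Sum.inl p →
        ∃ m : P.N, P.label m = Sum.inl p) ∧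
      ∀ ε : Var → ℚ, PDD.sem P' ε = PDD.sem P ε := by
  classical
  haveI := P.fin
  set S : Set (APred Var) := {p : APred Var | ∃ n : P.N, P.label n = Sum.inl p} with hS
  have hSfin : S.Finite := by
    have hch : ∀ p : S, ∃ n : P.N, P.label n = Sum.inl (p : APred Var) := fun p => p.2
    choose f hf using hch
    have hinj : Function.Injective f := by
      intro p q h
      apply Subtype.ext
      have h1 := hf p
      rw [h, hf q] at h1
      exact (Sum.inl.inj h1).symm
    exact Set.finite_coe_iff.mp (Finite.of_injective f hinj)
  obtain ⟨M0, hM0⟩ := (hSfin.image π).bddAbove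
  set M : ℕ := M0 + 1 with hMdef
  have hM : ∀ p ∈ S, π p < M := fun p hp =>
    Nat.lt_succ_of_le (hM0 (Set.mem_image_of_mem π hp))
  set F : (Var → ℚ) → Set Act := PDD.sem P with hFdef
  have hF : ∀ ε ε', Agrees S π 0 ε ε' → F ε = F ε' := by
    intro ε ε' ha
    exact P.semNode_congr _ _ (fun n l hl => ha l ⟨n, hl⟩ (Nat.zero_le _)) P.root
  set E0 : Set (Var → ℚ) := Set.univ with hE0def
  have hE0 : E0.Nonempty := ⟨fun _ => 0, trivial⟩
  have hfe0 : M ≤ lvlP S π F M E0 + M := Nat.le_add_left M _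
  set T₀ : PTree Var Act := pruneT S π F M M E0 with hT₀
  have hgood : GoodT S π (lvlP S π F M E0) T₀ := pruneT_good hF hM hπ hE0 hfe0
  refine ⟨treeDD T₀, ?_, ⟨?_, ?_⟩, ?_, ?_, ?_⟩
  · -- Consistent
    intro bs _
    obtain ⟨ε, hε, hcons⟩ := pruneT_consistent hF hM hπ bs M hE0 hfe0
    refine ⟨ε, fun i h p hl => ?_⟩
    apply hcons i h p
    rw [show (treeDD T₀).root = ⟨T₀, PTree.self_mem_subs T₀⟩ from rfl] at hl
    rw [show (treeDD T₀).label ((treeDD T₀).follow ⟨T₀, PTree.self_mem_subs T₀⟩ (List.take i bs))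
        = ((treeDD T₀).follow ⟨T₀, PTree.self_mem_subs T₀⟩ (List.take i bs)).val.labelF from rfl,
      treeDD_follow T₀ (List.take i bs) T₀ (PTree.self_mem_subs T₀)] at hl
    exact hl
  · -- essential
    rintro ⟨T, hT⟩ hd hcontra
    obtain ⟨l, hl⟩ := hd
    cases T with
    | leaf A => cases hl
    | node p t0 t1 =>
      obtain ⟨t, hg⟩ := goodT_subs hgood hT
      cases hg with
      | node hpS hle h0 h1 hne =>
        apply hne
        have h2 := congrArg Subtype.val hcontra
        simpa [treeDD, PTree.child] using h2
  · -- no distinct isomorphic nodes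
    intro n n' hiso
    exact treeDD_iso_eq T₀ n.val.ht n n' le_rfl hiso
  · -- Ordered
    rintro ⟨T, hT⟩ b l l' hl hl'
    cases T with
    | leaf A => cases hl
    | node p t0 t1 =>
      have hlp : p = l := Sum.inl.inj hl
      obtain ⟨t, hg⟩ := goodT_subs hgood hT
      cases hg with
      | node hpS hle h0 h1 hne =>
        rw [← hlp]
        cases b
        · cases t0 with
          | leaf A => cases hl'
          | node q a0 a1 =>
            have hql : q = l' := Sum.inl.inj hl'
            cases h0 with
            | node hqS hle' _ _ _ => rw [← hql]; omega
        · cases t1 with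
          | leaf A => cases hl'
          | node q a0 a1 =>
            have hql : q = l' := Sum.inl.inj hl'
            cases h1 with
            | node hqS hle' _ _ _ => rw [← hql]; omega
  · -- predicates occur in P
    rintro ⟨T, hT⟩ p hl
    cases T with
    | leaf A => cases hl
    | node q t0 t1 =>
      obtain ⟨t, hg⟩ := goodT_subs hgood hT
      cases hg with
      | node hqS hle h0 h1 hne =>
        have hqp : q = p := Sum.inl.inj hl
        rw [← hqp]
        exact hqS
  · -- semantics
    intro ε
    show (treeDD T₀).semNode (fun p => p.holds ε) (treeDD T₀).root = F ε
    rw [show (treeDD T₀).root = ⟨T₀, PTree.self_mem_subs T₀⟩ from rfl,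
      treeDD_semNode T₀ _ T₀ (PTree.self_mem_subs T₀)]
    exact pruneT_evalB hF hM hπ hE0 hfe0 ε trivial
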